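/- Let d ≥ 3 and φ : U_d → GL_d(ℂ) be a homomorphism from the unipotent upper triangular subgroup such that φ(E_{ij}) is unipotent for all i < j and φ(E_{1d}) ≠ id. Then the matrix φ(E_{1d}) − id has rank 1. -/

import Mathlib

/-!
Let `ρ` be a representation of `U_d` in which every `E i j` acts unipotently, and let
`0 = V₀ ≤ V₁ ≤ ⋯` be its ascending fixed-point series, `V (n+1) / V n` being the invariants of
`V / V n`. Conjugating a generator `E k l` by any generator only multiplies it by generators
`E a b` of larger gap `b - a`. So if the generators are added in order of decreasing gap, each
new one preserves the common fixed space (modulo `V n`) of the earlier ones, and its nilpotence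
then gives a new common fixed vector. Hence `V n < V (n+1)` until `V n = V`, and
`dim V (d-1) ≥ d - 1`.

Moreover `E i j` is the correction term in `E i m * E m j = E m j * E i m * E i j`, so
`ρ (E i j) - 1` lowers the series by `j - i`. In particular `ρ (E 0 (d-1)) - 1` kills `V (d-1)`.
A nonzero endomorphism of `ℂ^d` whose kernel has dimension at least `d - 1` has rank one.
-/

/-- The elementary matrix `E i j` (for `i ≠ j`) in `SL_d(ℤ)`. -/
def Emat (d : ℕ) (i j : Fin d) (h : i ≠ j) : Matrix.SpecialLinearGroup (Fin d) ℤ :=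
  ⟨Matrix.transvection i j 1, Matrix.det_transvection_of_ne i j h 1⟩

/-- The subgroup `U_d ≤ SL_d(ℤ)` of unipotent upper triangular matrices, i.e. the subgroup
generated by the elementary matrices `E i j` with `i < j`. -/
def unipotentUpper (d : ℕ) : Subgroup (Matrix.SpecialLinearGroup (Fin d) ℤ) :=
  Subgroup.closure { A | ∃ (i j : Fin d) (h : i < j), A = Emat d i j h.ne }

/-- The elementary matrix `E i j` (for `i < j`) as an element of `U_d`. -/
def EU (d : ℕ) (i j : Fin d) (h : i < j) : unipotentUpper d :=
  ⟨Emat d i j h.ne, Subgroup.subset_closure ⟨i, j, h, rfl⟩⟩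

namespace Matrix

variable {n R : Type*} [Fintype n] [DecidableEq n] [CommRing R]

theorem transvection_mul_transvection_of_ne {i j k : n} (hij : i ≠ j) (hik : i ≠ k) (a b : R) :
    transvection i j a * transvection j k b
      = transvection j k b * transvection i j a * transvection i k (a * b) := by
  simp only [transvection, add_mul, mul_add, one_mul, mul_one, single_mul_single_same,
    single_mul_single_of_ne _ _ _ _ hij.symm, single_mul_single_of_ne _ _ _ _ hik.symm, add_zero]
  abel

theorem transvection_commute {i j k l : n} (hjk : j ≠ k) (hli : l ≠ i) (a b : R) :
    Commute (transvection i j a) (transvection k l b) := by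
  simp only [Commute, SemiconjBy, transvection, add_mul, mul_add, one_mul, mul_one,
    single_mul_single_of_ne _ _ _ _ hjk, single_mul_single_of_ne _ _ _ _ hli, add_zero]
  abel

end Matrix

section UnipotentUpper

variable {d : ℕ}

lemma EU_mul_EU {i j k : Fin d} (hij : i < j) (hjk : j < k) :
    EU d i j hij * EU d j k hjk = EU d j k hjk * EU d i j hij * EU d i k (hij.trans hjk) :=
  Subtype.ext <| Subtype.ext <|
    Matrix.transvection_mul_transvection_of_ne hij.ne (hij.trans hjk).ne (1 : ℤ) 1

lemma EU_commute {i j k l : Fin d} (hij : i < j) (hkl : k < l) (hjk : j ≠ k) (hli : l ≠ i) :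
    Commute (EU d i j hij) (EU d k l hkl) :=
  Subtype.ext <| Subtype.ext <| (Matrix.transvection_commute hjk hli (1 : ℤ) 1).eq

lemma closure_range_EU :
    Subgroup.closure (Set.range fun p : {p : Fin d × Fin d // p.1 < p.2} ↦ EU d _ _ p.2) = ⊤ := by
  refine Eq.trans ?_ (Subgroup.closure_closure_coe_preimage
    (k := { A | ∃ (i j : Fin d) (h : i < j), A = Emat d i j h.ne }))
  congr 1
  ext A
  constructor
  · rintro ⟨⟨⟨i, j⟩, h⟩, rfl⟩
    exact ⟨i, j, h, rfl⟩
  · rintro ⟨i, j, h, hA⟩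
    exact ⟨⟨(i, j), h⟩, Subtype.ext hA.symm⟩

lemma EU_inv_mul_mul_mem_closure {i j k l : Fin d} (hij : i < j) (hkl : k < l) :
    (EU d i j hij)⁻¹ * EU d k l hkl * EU d i j hij ∈ Subgroup.closure (insert (EU d k l hkl)
      {g | ∃ (a b : Fin d) (hab : a < b), (l : ℕ) - k < b - a ∧ EU d a b hab = g}) := by
  have hij' := Fin.lt_def.1 hij
  have hkl' := Fin.lt_def.1 hkl
  set S : Set (unipotentUpper d) := insert (EU d k l hkl)
    {g | ∃ (a b : Fin d) (hab : a < b), (l : ℕ) - k < b - a ∧ EU d a b hab = g}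
  have self_mem : EU d k l hkl ∈ Subgroup.closure S :=
    Subgroup.subset_closure (Set.mem_insert _ _)
  have deeper_mem {a b : Fin d} (hab : a < b) (h : (l : ℕ) - k < b - a) :
      EU d a b hab ∈ Subgroup.closure S :=
    Subgroup.subset_closure (Set.mem_insert_of_mem _ ⟨a, b, hab, h, rfl⟩)
  by_cases hjk : j = k
  · subst hjk
    have h := EU_mul_EU hij hkl
    rw [show (EU d i j hij)⁻¹ * EU d j l hkl * EU d i j hij
        = EU d j l hkl * (EU d i l (hij.trans hkl))⁻¹ by
      rw [eq_mul_inv_iff_mul_eq, mul_assoc, mul_assoc, ← mul_assoc (EU d j l hkl), ← h,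
        inv_mul_cancel_left]]
    exact mul_mem self_mem (inv_mem (deeper_mem _ (by omega)))
  by_cases hli : l = i
  · subst hli
    rw [mul_assoc, EU_mul_EU hkl hij, mul_assoc, inv_mul_cancel_left]
    exact mul_mem self_mem (deeper_mem _ (by omega))
  rw [mul_assoc, ← (EU_commute hij hkl hjk hli).eq, inv_mul_cancel_left]
  exact self_mem

end UnipotentUpper

theorem Module.End.exists_mem_notMem_apply_mem_of_isNilpotent {R M : Type*} [CommRing R]
    [AddCommGroup M] [Module R M] {T : Module.End R M} (hT : IsNilpotent T)
    {X U : Submodule R M} (hX : X ∈ T.invtSubmodule) (hXU : ¬X ≤ U) :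
    ∃ v ∈ X, v ∉ U ∧ T v ∈ U := by
  classical
  obtain ⟨x, hxX, hxU⟩ := SetLike.not_le_iff_exists.1 hXU
  have hex : ∃ m, (T ^ m) x ∈ U := by
    obtain ⟨n, hn⟩ := hT
    exact ⟨n, by simp [hn]⟩
  have hpow : ∀ m, (T ^ m) x ∈ X := by
    intro m
    induction m with
    | zero => simpa
    | succ m ih => rw [pow_succ', Module.End.mul_apply]; exact hX ih
  have hm : Nat.find hex ≠ 0 := fun h ↦ hxU (by simpa [h] using Nat.find_spec hex)
  obtain ⟨m, hm'⟩ := Nat.exists_eq_succ_of_ne_zero hm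
  refine ⟨(T ^ m) x, hpow m, Nat.find_min hex (by omega), ?_⟩
  simpa [hm', pow_succ'] using Nat.find_spec hex

namespace Representation

variable {k G V : Type*} [CommRing k] [Group G] [AddCommGroup V] [Module k V]
  {ρ : Representation k G V}

variable (ρ) in
def invariantsMod (U : Submodule k V) (S : Set G) : Submodule k V :=
  ⨅ g ∈ S, U.comap (ρ g - 1)

lemma mem_invariantsMod {U : Submodule k V} {S : Set G} {v : V} :
    v ∈ ρ.invariantsMod U S ↔ ∀ g ∈ S, ρ g v - v ∈ U := by
  simp [invariantsMod]

lemma apply_mem_of_mem_invtSubmodule {U : Submodule k V} (hU : U ∈ ρ.invtSubmodule) (g : G)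
    {v : V} (hv : v ∈ U) : ρ g v ∈ U :=
  ρ.mem_invtSubmodule.1 hU g hv

lemma mem_of_apply_mem {U : Submodule k V} (hU : U ∈ ρ.invtSubmodule) (g : G) {v : V}
    (hv : ρ g v ∈ U) : v ∈ U := by
  simpa [inv_self_apply] using apply_mem_of_mem_invtSubmodule hU g⁻¹ hv

def stabilizerMod {U : Submodule k V} (hU : U ∈ ρ.invtSubmodule) (v : V) : Subgroup G where
  carrier := {g | ρ g v - v ∈ U}
  one_mem' := by simp
  mul_mem' {g h} hg hh := by
    have : ρ (g * h) v - v = ρ g (ρ h v - v) + (ρ g v - v) := by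
      rw [map_mul, Module.End.mul_apply, map_sub]
      abel
    show ρ (g * h) v - v ∈ U
    rw [this]
    exact add_mem (apply_mem_of_mem_invtSubmodule hU g hh) hg
  inv_mem' {g} hg := by
    have : ρ g⁻¹ v - v = -ρ g⁻¹ (ρ g v - v) := by rw [map_sub, inv_self_apply, neg_sub]
    show ρ g⁻¹ v - v ∈ U
    rw [this]
    exact neg_mem (apply_mem_of_mem_invtSubmodule hU g⁻¹ hg)

lemma sub_mem_of_mem_closure {U : Submodule k V} (hU : U ∈ ρ.invtSubmodule) {S : Set G}
    {v : V} (hv : v ∈ ρ.invariantsMod U S) {g : G} (hg : g ∈ Subgroup.closure S) :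
    ρ g v - v ∈ U :=
  (Subgroup.closure_le (stabilizerMod hU v)).2 (mem_invariantsMod.1 hv) hg

lemma invariantsMod_closure {U : Submodule k V} (hU : U ∈ ρ.invtSubmodule) (S : Set G) :
    ρ.invariantsMod U (Subgroup.closure S) = ρ.invariantsMod U S := by
  ext v
  refine ⟨fun hv ↦ mem_invariantsMod.2 fun g hg ↦ mem_invariantsMod.1 hv g
    (Subgroup.subset_closure hg), fun hv ↦ mem_invariantsMod.2 fun g hg ↦
    sub_mem_of_mem_closure hU hv hg⟩

lemma apply_mem_invariantsMod {U : Submodule k V} (hU : U ∈ ρ.invtSubmodule) {S : Set G}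
    {g : G} (hg : ∀ h ∈ S, g⁻¹ * h * g ∈ Subgroup.closure S) {v : V}
    (hv : v ∈ ρ.invariantsMod U S) : ρ g v ∈ ρ.invariantsMod U S := by
  refine mem_invariantsMod.2 fun h hh ↦ ?_
  have : ρ h (ρ g v) - ρ g v = ρ g (ρ (g⁻¹ * h * g) v - v) := by
    simp only [map_sub, ← Module.End.mul_apply, ← map_mul, mul_assoc, mul_inv_cancel_left]
  rw [this]
  exact apply_mem_of_mem_invtSubmodule hU g (sub_mem_of_mem_closure hU hv (hg h hh))

theorem not_invariantsMod_le_of_weight {ι : Type*} [Fintype ι] (f : ι → G) (w : ι → ℕ)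
    (hnil : ∀ a, IsNilpotent (ρ (f a) - 1))
    (hconj : ∀ a b, (f a)⁻¹ * f b * f a ∈ Subgroup.closure (insert (f b) (f '' {c | w b < w c})))
    {U : Submodule k V} (hU : U ∈ ρ.invtSubmodule) (hUtop : U ≠ ⊤) :
    ¬ρ.invariantsMod U (Set.range f) ≤ U := by
  classical
  suffices h : ∀ s : Finset ι, (∀ b ∈ s, ∀ c, w b < w c → c ∈ s) →
      ¬ρ.invariantsMod U (f '' s) ≤ U by
    simpa using h Finset.univ (by simp)
  intro s
  induction s using Finset.induction_on_min_value w with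
  | empty => simpa [invariantsMod, top_le_iff] using hUtop
  | insert a s _ hmin ih =>
    intro hup
    have hup' : ∀ b ∈ s, ∀ c, w b < w c → c ∈ s := fun b hb c hbc ↦
      (Finset.mem_insert.1 (hup b (Finset.mem_insert_of_mem hb) c hbc)).resolve_left
        (by rintro rfl; exact (hmin b hb).not_gt hbc)
    have hinv : ρ.invariantsMod U (f '' s) ∈ Module.End.invtSubmodule (ρ (f a) - 1) := by
      intro v hv
      refine sub_mem (apply_mem_invariantsMod hU ?_ hv) hv
      rintro _ ⟨b, hb, rfl⟩
      refine Subgroup.closure_mono ?_ (hconj a b)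
      rintro _ (rfl | ⟨c, hc, rfl⟩)
      · exact ⟨b, hb, rfl⟩
      · exact ⟨c, hup' b hb c hc, rfl⟩
    obtain ⟨v, hv, hvU, hav⟩ :=
      Module.End.exists_mem_notMem_apply_mem_of_isNilpotent (hnil a) hinv (ih hup')
    refine fun hle ↦ hvU (hle ?_)
    rw [Finset.coe_insert, Set.image_insert_eq, mem_invariantsMod]
    rintro g (rfl | hg)
    · exact hav
    · exact mem_invariantsMod.1 hv g hg

variable (ρ) in
def fixedSeries : ℕ → Submodule k V
  | 0 => ⊥
  | n + 1 => ρ.invariantsMod (fixedSeries n) Set.univ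

lemma mem_fixedSeries_succ {n : ℕ} {v : V} :
    v ∈ ρ.fixedSeries (n + 1) ↔ ∀ g, ρ g v - v ∈ ρ.fixedSeries n := by
  simp [fixedSeries, mem_invariantsMod]

lemma fixedSeries_mem_invtSubmodule (n : ℕ) : ρ.fixedSeries n ∈ ρ.invtSubmodule := by
  induction n with
  | zero => exact invtSubmodule.bot_mem ρ
  | succ n ih =>
    refine ρ.mem_invtSubmodule.2 fun g _ hv ↦ apply_mem_invariantsMod ih ?_ hv
    simp

lemma fixedSeries_le_succ (n : ℕ) : ρ.fixedSeries n ≤ ρ.fixedSeries (n + 1) := fun _ hv ↦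
  mem_fixedSeries_succ.2 fun g ↦
    sub_mem (apply_mem_of_mem_invtSubmodule (fixedSeries_mem_invtSubmodule n) g hv) hv

variable (ρ) in
def LowersSeries (c : ℕ) (g : G) : Prop :=
  ∀ n, ∀ v ∈ ρ.fixedSeries (n + c), ρ g v - v ∈ ρ.fixedSeries n

lemma lowersSeries_one (g : G) : ρ.LowersSeries 1 g := fun _ _ hv ↦
  mem_fixedSeries_succ.1 hv g

lemma LowersSeries.of_mul_eq {x y z : G} {p q : ℕ} (h : x * y = y * x * z)
    (hx : ρ.LowersSeries p x) (hy : ρ.LowersSeries q y) : ρ.LowersSeries (p + q) z := by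
  intro n v hv
  refine mem_of_apply_mem (fixedSeries_mem_invtSubmodule n) (y * x) ?_
  have key : ρ (y * x) (ρ z v - v) =
      (ρ x (ρ y v - v) - (ρ y v - v)) - (ρ y (ρ x v - v) - (ρ x v - v)) := by
    rw [map_sub, ← Module.End.mul_apply, ← map_mul, ← h]
    simp only [map_mul, Module.End.mul_apply, map_sub]
    abel
  rw [key]
  refine sub_mem (hx n _ (hy _ _ ?_)) (hy n _ (hx _ _ ?_))
  · rwa [add_assoc]
  · rwa [add_assoc, add_comm q]

lemma LowersSeries.fixedSeries_le_ker {c : ℕ} {g : G} (h : ρ.LowersSeries c g) :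
    ρ.fixedSeries c ≤ LinearMap.ker (ρ g - 1) := fun v hv ↦ by
  simpa [fixedSeries] using h 0 v (by rwa [zero_add])

end Representation

theorem Representation.min_le_finrank_fixedSeries {K G V : Type*} [Field K] [Group G]
    [AddCommGroup V] [Module K V] [FiniteDimensional K V] {ρ : Representation K G V}
    (hfix : ∀ U ∈ ρ.invtSubmodule, U ≠ ⊤ → ¬ρ.invariantsMod U Set.univ ≤ U) (n : ℕ) :
    min n (Module.finrank K V) ≤ Module.finrank K (ρ.fixedSeries n) := by
  induction n with
  | zero => simp
  | succ n ih =>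
    by_cases htop : ρ.fixedSeries n = ⊤
    · have : ρ.fixedSeries (n + 1) = ⊤ := top_le_iff.1 (htop ▸ ρ.fixedSeries_le_succ n)
      rw [this, finrank_top]
      exact min_le_right _ _
    · have hlt : ρ.fixedSeries n < ρ.fixedSeries (n + 1) :=
        lt_of_le_not_ge (ρ.fixedSeries_le_succ n)
          (hfix _ (ρ.fixedSeries_mem_invtSubmodule n) htop)
      have := Submodule.finrank_lt_finrank_of_lt hlt
      omega

theorem Module.End.finrank_range_eq_one {K V : Type*} [Field K] [AddCommGroup V] [Module K V]
    [FiniteDimensional K V] {N : Module.End K V} (hN : N ≠ 0)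
    (hker : Module.finrank K V ≤ Module.finrank K (LinearMap.ker N) + 1) :
    Module.finrank K (LinearMap.range N) = 1 := by
  have hrange : Module.finrank K (LinearMap.range N) ≠ 0 := by
    rwa [Ne, Submodule.finrank_eq_zero, LinearMap.range_eq_bot]
  have := LinearMap.finrank_range_add_finrank_ker N
  omega

section UnipotentUpperRepresentation

variable {d : ℕ} {k V : Type*} [CommRing k] [AddCommGroup V] [Module k V]
  (ρ : Representation k (unipotentUpper d) V)

theorem lowersSeries_EU {i j : Fin d} (h : i < j) : ρ.LowersSeries (j - i) (EU d i j h) := by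
  obtain ⟨n, hn⟩ : ∃ n, (j : ℕ) = i + n + 1 := ⟨j - i - 1, by omega⟩
  induction n generalizing i with
  | zero =>
    rw [show (j : ℕ) - i = 1 by omega]
    exact Representation.lowersSeries_one _
  | succ n ih =>
    let m : Fin d := ⟨i + 1, by omega⟩
    have him : i < m := Fin.lt_def.2 (by simp [m])
    have hmj : m < j := Fin.lt_def.2 (by simp [m]; omega)
    have := (Representation.lowersSeries_one _).of_mul_eq (EU_mul_EU him hmj)
      (ih hmj (by simp [m]; omega))
    rwa [show 1 + ((j : ℕ) - m) = j - i by simp [m]; omega] at this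

theorem not_invariantsMod_le_of_isNilpotent
    (hunip : ∀ (i j : Fin d) (h : i < j), IsNilpotent (ρ (EU d i j h) - 1))
    {U : Submodule k V} (hU : U ∈ ρ.invtSubmodule) (hUtop : U ≠ ⊤) :
    ¬ρ.invariantsMod U Set.univ ≤ U := by
  have key := ρ.not_invariantsMod_le_of_weight (fun p : {p : Fin d × Fin d // p.1 < p.2} ↦
    EU d _ _ p.2) (fun p ↦ p.1.2 - p.1.1) (fun p ↦ hunip _ _ p.2) ?_ hU hUtop
  · rwa [← Representation.invariantsMod_closure hU, closure_range_EU, Subgroup.coe_top] at key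
  rintro ⟨⟨i, j⟩, hij : i < j⟩ ⟨⟨k, l⟩, hkl : k < l⟩
  refine Subgroup.closure_mono ?_ (EU_inv_mul_mul_mem_closure hij hkl)
  rintro _ (rfl | ⟨a, b, hab, h, rfl⟩)
  · exact Or.inl rfl
  · exact Or.inr ⟨⟨(a, b), hab⟩, h, rfl⟩

end UnipotentUpperRepresentation

/-- Let `d ≥ 3` and `φ : U_d → GL_d(ℂ)` be such that `φ(E_{ij})` is unipotent for all `i < j`
and `φ(E_{1d}) ≠ id`. Then `φ(E_{1d}) − id` has rank 1. -/
theorem rank_one_of_unipotent_image (d : ℕ) (hd : 3 ≤ d)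
    (φ : unipotentUpper d →* GL (Fin d) ℂ)
    (hunip : ∀ (i j : Fin d) (h : i < j),
      IsNilpotent ((φ (EU d i j h) : Matrix (Fin d) (Fin d) ℂ) - 1))
    (hne : φ (EU d ⟨0, by omega⟩ ⟨d - 1, by omega⟩ (Fin.mk_lt_mk.mpr (by omega))) ≠ 1) :
    ((φ (EU d ⟨0, by omega⟩ ⟨d - 1, by omega⟩ (Fin.mk_lt_mk.mpr (by omega))) :
        Matrix (Fin d) (Fin d) ℂ) - 1).rank = 1 := by
  let ρ : Representation ℂ (unipotentUpper d) (Fin d → ℂ) :=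
    (Matrix.toLinAlgEquiv' : Matrix (Fin d) (Fin d) ℂ ≃ₐ[ℂ] _).toMonoidHom.comp
      ((Units.coeHom _).comp φ)
  have hρ (x) : ρ x - 1 = ((φ x : Matrix (Fin d) (Fin d) ℂ) - 1).mulVecLin := by
    rw [← Matrix.toLin'_apply', map_sub, Matrix.toLin'_one]
    rfl
  have hdim := Representation.min_le_finrank_fixedSeries (fun _ hU hUtop ↦
    not_invariantsMod_le_of_isNilpotent ρ
      (fun i j h ↦ hρ (EU d i j h) ▸ (hunip i j h).map Matrix.toLinAlgEquiv') hU hUtop) (d - 1)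
  have hker := Submodule.finrank_mono
    (lowersSeries_EU ρ (i := ⟨0, by omega⟩) (j := ⟨d - 1, by omega⟩)
      (Fin.mk_lt_mk.mpr (by omega))).fixedSeries_le_ker
  rw [Module.finrank_fin_fun] at hdim
  simp only [Fin.val_mk, Nat.sub_zero] at hker
  rw [Matrix.rank, ← hρ]
  refine Module.End.finrank_range_eq_one ?_ ?_
  · rw [hρ, Ne, ← Matrix.toLin'_apply', LinearEquiv.map_eq_zero_iff, sub_eq_zero]
    exact fun h ↦ hne (Units.ext h)
  · rw [Module.finrank_fin_fun]
    omega
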